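/- arXiv:1106.5915 — 2 statements merged into one kernel-verified Lean document; each statement's English description precedes it below -/
import Mathlib

section
/- Sufficient condition for a.e. continuity of the conditional expectation (Proposition 4.4). Let H: D×D→ℝ be product-measurable, satisfy condition (f1), and suppose that for each w∈D the function H(w,·) is continuous from below on {τ_0(w')<∞} a.s. P_z for every z∈ℝ, i.e. lim_{ε↓0} H(w, w'−c^ε) = H(w,w') a.s. P_z on {τ_0(w')<∞}, where τ_0(w')=inf{t>0: w'_t>0}. Then condition (f2) holds: for every w∈D the function z ↦ G(w,z)=E_z[H(w,X); τ(0)<∞] is continuous at all but countably many z∈ℝ, hence continuous Lebesgue-a.e. -/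
open MeasureTheory ProbabilityTheory Filter Set Real
open scoped ENNReal NNReal

noncomputable section

namespace GriffinMaller

/-! ### Convolution equivalent distributions -/

/-- Convolution of two measures on `ℝ`. -/
def mconv (m₁ m₂ : Measure ℝ) : Measure ℝ :=
  (m₁.prod m₂).map fun p => p.1 + p.2

/-- The (real-valued) tail of a measure on `ℝ`. -/
def mtail (m : Measure ℝ) (u : ℝ) : ℝ := (m (Set.Ioi u)).toReal

/-- A probability distribution on `[0,∞)` belongs to the convolution equivalent class
`S^(α)`: its tail is everywhere positive, `F̄(u+x)/F̄(u) → e^{-αx}` and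
`F̄^{2*}(u)/F̄(u)` converges to a finite limit as `u → ∞`. -/
def IsConvEquiv (α : ℝ) (m : Measure ℝ) : Prop :=
  IsProbabilityMeasure m ∧ m (Set.Iio 0) = 0 ∧ (∀ u : ℝ, 0 < mtail m u) ∧
    (∀ x : ℝ, Tendsto (fun u => mtail m (u + x) / mtail m u) atTop
      (nhds (Real.exp (-α * x)))) ∧
    ∃ L : ℝ, Tendsto (fun u => mtail (mconv m m) u / mtail m u) atTop (nhds L)

/-- A nonnegative tail function `T` (e.g. the tail of a Lévy measure) is in `S^(α)`:
it is tail equivalent to a convolution equivalent probability distribution on `[0,∞)`.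
(The class `S^(α)` is closed under tail equivalence.) -/
def TailInSalpha (α : ℝ) (T : ℝ → ℝ) : Prop :=
  ∃ m : Measure ℝ, IsConvEquiv α m ∧
    ∃ c : ℝ, 0 < c ∧ Tendsto (fun u => T u / mtail m u) atTop (nhds c)

/-! ### Path functionals -/

/-- The path of the process at a sample point. -/
def path {Ω : Type*} (X : ℝ → Ω → ℝ) (ω : Ω) : ℝ → ℝ := fun t => X t ω

/-- Càdlàg on `[0,∞)`: right continuous with left limits. -/
def Cadlag (w : ℝ → ℝ) : Prop :=
  (∀ t : ℝ, 0 ≤ t → ContinuousWithinAt w (Set.Ici t) t) ∧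
    ∀ t : ℝ, 0 < t → ∃ l : ℝ, Tendsto w (nhdsWithin t (Set.Iio t)) (nhds l)

/-- Running supremum `w̄_t = sup_{0 ≤ s ≤ t} w_s`. -/
def runSup (w : ℝ → ℝ) (t : ℝ) : ℝ := sSup (w '' Set.Icc 0 t)

/-- Supremum `w̄_{t-}` over `[0,t)` (with the convention `w̄_{0-} = w_0`). -/
def preSup (w : ℝ → ℝ) (t : ℝ) : ℝ := sSup (w '' insert 0 (Set.Ico 0 t))

/-- The left limit `w_{t-}` (with the convention `w_{0-} = w_0`). -/
def preVal (w : ℝ → ℝ) (t : ℝ) : ℝ := if 0 < t then Function.leftLim w t else w 0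

/-- `G_{t-}`, the last time on `[0,t)` at which the path attains its running maximum
(with the convention `G_{0-} = 0`). -/
def lastMaxPre (w : ℝ → ℝ) (t : ℝ) : ℝ := sSup {s | 0 ≤ s ∧ s < t ∧ w s = runSup w s}

/-- First passage time of a path strictly above the level `0`. -/
def tauP (w : ℝ → ℝ) : ℝ := sInf {t | 0 ≤ t ∧ 0 < w t}

/-! ### Lévy processes -/

variable {Ω : Type*} [MeasurableSpace Ω]

/-- `X` is a Lévy process under the probability measure `P`: it starts at `0`, has
a.s. càdlàg paths and stationary, (mutually) independent increments. -/
structure IsLevy (P : Measure Ω) (X : ℝ → Ω → ℝ) : Prop where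
  isProb : IsProbabilityMeasure P
  meas : ∀ t, Measurable (X t)
  negTimes : ∀ t : ℝ, t ≤ 0 → ∀ ω, X t ω = X 0 ω
  init : ∀ᵐ ω ∂P, X 0 ω = 0
  cadlag : ∀ᵐ ω ∂P, Cadlag (path X ω)
  stationary : ∀ s t : ℝ, 0 ≤ s → 0 ≤ t →
    Measure.map (fun ω => X (s + t) ω - X s ω) P = Measure.map (X t) P
  indepIncr : ∀ (n : ℕ) (a : ℕ → ℝ), (∀ i, 0 ≤ a i) → Monotone a →
    iIndepFun (m := fun _ : Fin n => (inferInstance : MeasurableSpace ℝ))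
      (fun i ω => X (a (i.1 + 1)) ω - X (a i.1) ω) P

/-- `X` is not the negative of a subordinator. -/
def NotNegSubordinator (P : Measure Ω) (X : ℝ → Ω → ℝ) : Prop :=
  ¬ ∀ᵐ ω ∂P, ∀ s t : ℝ, 0 ≤ s → s ≤ t → X t ω ≤ X s ω

/-- Expected number of jumps of size `> x` during the time interval `(0,1]`; for
`x > 0` this is the tail `Π̄⁺_X(x)` of the Lévy measure of `X`. -/
def jumpTailE (P : Measure Ω) (X : ℝ → Ω → ℝ) (x : ℝ) : ℝ≥0∞ :=
  ∫⁻ ω, Measure.count {t : ℝ | t ∈ Set.Ioc (0:ℝ) 1 ∧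
    x < X t ω - Function.leftLim (path X ω) t} ∂P

/-- The tail `Π̄⁺_X` of the Lévy measure, as a real-valued function. -/
def jumpTail (P : Measure Ω) (X : ℝ → Ω → ℝ) (x : ℝ) : ℝ := (jumpTailE P X x).toReal

/-- `ν` is (the restriction to `(0,∞)` of) the Lévy measure of `X`. -/
def IsPosLevyMeasure (P : Measure Ω) (X : ℝ → Ω → ℝ) (ν : Measure ℝ) : Prop :=
  ν (Set.Iic 0) = 0 ∧ ∀ x : ℝ, 0 < x → ν (Set.Ioi x) = jumpTailE P X x

/-! ### Ruin quantities -/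

/-- Ruin event `{τ(u) < ∞}`. -/
def ruinSet (X : ℝ → Ω → ℝ) (u : ℝ) : Set Ω := {ω | ∃ t, 0 ≤ t ∧ u < X t ω}

/-- Ruin time `τ(u) = inf{t ≥ 0 : X_t > u}` (junk value on `{τ(u) = ∞}`). -/
def tauT (X : ℝ → Ω → ℝ) (u : ℝ) (ω : Ω) : ℝ := sInf {t | 0 ≤ t ∧ u < X t ω}

/-- The conditional probability measure `P^{(u)} = P(· | τ(u) < ∞)`. -/
def condRuin (P : Measure Ω) (X : ℝ → Ω → ℝ) (u : ℝ) : Measure Ω :=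
  ProbabilityTheory.cond P (ruinSet X u)

/-- The event `{τ(0) < ∞}` for the process started at `z`. -/
def shiftRuin (X : ℝ → Ω → ℝ) (z : ℝ) : Set Ω := {ω | ∃ s, 0 ≤ s ∧ 0 < z + X s ω}

/-- The constant `c₁ = -log E e^{α X_1}`. -/
def c1 (P : Measure Ω) (X : ℝ → Ω → ℝ) (α : ℝ) : ℝ :=
  -Real.log (∫ ω, Real.exp (α * X 1 ω) ∂P)

/-- The constant `c₂ = (1 + α ∫_0^∞ e^{α z} P(τ(z) < ∞) dz)⁻¹`. -/
def c2 (P : Measure Ω) (X : ℝ → Ω → ℝ) (α : ℝ) : ℝ :=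
  (1 + α * ∫ z in Set.Ioi (0:ℝ), Real.exp (α * z) * (P (ruinSet X z)).toReal)⁻¹

/-- The standing assumption: `X` is a Lévy process, not the negative of a subordinator,
`Π̄⁺_X ∈ S^(α)` and `E e^{α X_1} < 1` for some `α > 0`. -/
structure Standing (P : Measure Ω) (X : ℝ → Ω → ℝ) (α : ℝ) : Prop where
  levy : IsLevy P X
  notNegSub : NotNegSubordinator P X
  posAlpha : 0 < α
  tailS : TailInSalpha α (jumpTail P X)
  expInt : Integrable (fun ω => Real.exp (α * X 1 ω)) P
  expLT : ∫ ω, Real.exp (α * X 1 ω) ∂P < 1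

/-! ### Killed paths: the Skorohod space with cemetery state

Here `EReal` serves as `ℝ ∪ {Δ}`, with `⊥` playing the role of the cemetery `Δ`. -/

/-- The path `w` killed at time `r`. -/
def kill (w : ℝ → ℝ) (r : ℝ) : ℝ → EReal := fun t => if t < r then (w t : EReal) else ⊥

/-- A real path viewed as a never-killed path in the extended state space. -/
def alive (w : ℝ → ℝ) : ℝ → EReal := fun t => (w t : EReal)

/-- Death time `τ_Δ` of a killed path. -/
def deathTime (v : ℝ → EReal) : ℝ := sInf {t | 0 < t ∧ v t = ⊥}

/-- The value `w_{τ_Δ(w)-}` of a killed path immediately prior to its death time. -/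
def preDeath (v : ℝ → EReal) : ℝ :=
  Function.leftLim (fun t => (v t).toReal) (deathTime v)

/-- `G(w,z) = E_z[H(w,X); τ(0) < ∞]`. -/
def GFun (P : Measure Ω) (X : ℝ → Ω → ℝ)
    (H : (ℝ → EReal) → (ℝ → EReal) → ℝ) (v : ℝ → EReal) (z : ℝ) : ℝ :=
  ∫ ω in shiftRuin X z, H v (alive fun t => z + X t ω) ∂P

/-- The class `𝓗` of functionals `H` on pairs of killed paths: product measurable,
satisfying the growth condition (f1) (note `e^{θ w⁻ 1(w⁻ ≤ 0)} = e^{θ min(w⁻,0)}`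
where `w⁻ = w_{τ_Δ(w)-}`), and the a.e. continuity condition (f2) on
`G(w,z) = E_z[H(w,X); τ(0) < ∞]`. -/
structure MemH (P : Measure Ω) (X : ℝ → Ω → ℝ) (α : ℝ)
    (H : (ℝ → EReal) → (ℝ → EReal) → ℝ) : Prop where
  meas : Measurable (Function.uncurry H)
  f1 : ∃ θ : ℝ, 0 ≤ θ ∧ θ < α ∧ ∃ C : ℝ, ∀ v v' : ℝ → EReal,
    |H v v'| * Real.exp (θ * min (preDeath v) 0) ≤ C
  f2 : ∀ v : ℝ → EReal, ∀ᵐ z ∂(volume : Measure ℝ), ContinuousAt (GFun P X H v) z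

/-- The post-passage path `t ↦ X_{τ(u-x)+t} - u`. -/
def postPath (X : ℝ → Ω → ℝ) (u x : ℝ) (ω : Ω) : ℝ → ℝ :=
  fun t => X (tauT X (u - x) ω + t) ω - u

/-! ### The limit objects `ρ`, `Z`, `W` -/

/-- The exponential distribution with parameter `r`. -/
def expMeasure (r : ℝ) : Measure ℝ :=
  (volume.restrict (Set.Ici (0:ℝ))).withDensity fun t => ENNReal.ofReal (r * Real.exp (-r * t))

/-- The law of the process `W`:
`P(W ∈ dw) = c₂ ∫_ℝ α e^{-α z} P_z(X ∈ dw ; τ(0) < ∞) dz`. -/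
def lawW (P : Measure Ω) (X : ℝ → Ω → ℝ) (α : ℝ) : Measure (ℝ → ℝ) :=
  Measure.bind
    ((volume : Measure ℝ).withDensity fun z =>
      ENNReal.ofReal (c2 P X α * α * Real.exp (-α * z)))
    fun z => Measure.map (fun ω => fun t => z + X t ω) (P.restrict (shiftRuin X z))

/-- `Z` is the Esscher transform of `X`: for each `s ≥ 0` the law of the stopped path
`Z_{· ∧ s}` has density `e^{c₁ s} e^{α X_s}` with respect to the law of `X_{· ∧ s}`. -/
def IsEsscher (P : Measure Ω) (X : ℝ → Ω → ℝ) (α : ℝ)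
    {Ω' : Type*} [MeasurableSpace Ω'] (P' : Measure Ω') (Z : ℝ → Ω' → ℝ) : Prop :=
  ∀ s : ℝ, 0 ≤ s →
    Measure.map (fun ω' => fun t => Z (min t s) ω') P' =
      Measure.map (fun ω => fun t => X (min t s) ω)
        (P.withDensity fun ω => ENNReal.ofReal (Real.exp (c1 P X α * s + α * X s ω)))

/-- The triple `(ρ, Z, W)` of (mutually independent) limit objects, realized on an
auxiliary probability space `(Ω', P')`. -/
structure LimitObjects (P : Measure Ω) (X : ℝ → Ω → ℝ) (α : ℝ)
    {Ω' : Type*} [MeasurableSpace Ω'] (P' : Measure Ω')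
    (ρ : Ω' → ℝ) (Z W : ℝ → Ω' → ℝ) : Prop where
  isProb : IsProbabilityMeasure P'
  rhoLaw : Measure.map ρ P' = expMeasure (c1 P X α)
  zLaw : IsEsscher P X α P' Z
  wLaw : Measure.map (fun ω' => path W ω') P' = lawW P X α
  cadlagZ : ∀ᵐ ω' ∂P', Cadlag (path Z ω')
  cadlagW : ∀ᵐ ω' ∂P', Cadlag (path W ω')
  indepRho : IndepFun ρ (fun ω' => (path Z ω', path W ω')) P'
  indepZW : IndepFun (fun ω' => path Z ω') (fun ω' => path W ω') P'

/-- The pair `(ρ, W)` of independent limit objects (when `Z` is not needed). -/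
structure WRhoObjects (P : Measure Ω) (X : ℝ → Ω → ℝ) (α : ℝ)
    {Ω' : Type*} [MeasurableSpace Ω'] (P' : Measure Ω')
    (ρ : Ω' → ℝ) (W : ℝ → Ω' → ℝ) : Prop where
  isProb : IsProbabilityMeasure P'
  rhoLaw : Measure.map ρ P' = expMeasure (c1 P X α)
  wLaw : Measure.map (fun ω' => path W ω') P' = lawW P X α
  cadlagW : ∀ᵐ ω' ∂P', Cadlag (path W ω')
  indep : IndepFun ρ (fun ω' => path W ω') P'

/-! ### The measures `μ_K` and `ν_x` on path space -/

/-- Path marginal of the measure `μ_K`: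
`μ_K(dw) = c₁ ∫_0^∞ 1(X_{t-} < K) e^{α X_{t-}} P(X_{[0,t)} ∈ dw) dt`. -/
def muK (P : Measure Ω) (X : ℝ → Ω → ℝ) (α K : ℝ) : Measure (ℝ → EReal) :=
  Measure.bind (volume.restrict (Set.Ici (0:ℝ))) fun t =>
    Measure.map (fun ω => kill (path X ω) t)
      (P.withDensity fun ω =>
        if preVal (path X ω) t < K then
          ENNReal.ofReal (c1 P X α * Real.exp (α * preVal (path X ω) t)) else 0)

/-- Path marginal of the measure `μ = μ_∞`:
`μ(dw) = c₁ ∫_0^∞ e^{α X_{t-}} P(X_{[0,t)} ∈ dw) dt`. -/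
def muMeasure (P : Measure Ω) (X : ℝ → Ω → ℝ) (α : ℝ) : Measure (ℝ → EReal) :=
  Measure.bind (volume.restrict (Set.Ici (0:ℝ))) fun t =>
    Measure.map (fun ω => kill (path X ω) t)
      (P.withDensity fun ω =>
        ENNReal.ofReal (c1 P X α * Real.exp (α * preVal (path X ω) t)))

/-- Path marginal of the measure `ν_x`:
`ν_x(dw') = c₂ ∫ 1(z > -x) α e^{-α z} P_z(X ∈ dw'; τ(0) < ∞) dz`. -/
def nuX (P : Measure Ω) (X : ℝ → Ω → ℝ) (α x : ℝ) : Measure (ℝ → EReal) :=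
  Measure.bind
    ((volume : Measure ℝ).withDensity fun z =>
      if -x < z then ENNReal.ofReal (c2 P X α * α * Real.exp (-α * z)) else 0)
    fun z => Measure.map (fun ω => alive fun t => z + X t ω) (P.restrict (shiftRuin X z))

/-- The potential measure `V_X(dζ) = ∫_0^∞ P(X_t ∈ dζ) dt`. -/
def potential (P : Measure Ω) (X : ℝ → Ω → ℝ) : Measure ℝ :=
  Measure.bind (volume.restrict (Set.Ici (0:ℝ))) fun t => Measure.map (X t) P
end GriffinMaller

/-! Starting at `z - ε` instead of `z` shifts the path by `-ε`. With passage tested at rational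
times (almost surely the same for càdlàg paths) the ruin event is monotone and left-continuous
in `z`, so continuity from below and bounded convergence make `z ↦ G(w,z)` left-continuous; and
a left-continuous real function has at most countably many discontinuities. -/

open Topology

section LeftContinuous

variable {E : Type*} [PseudoMetricSpace E] {f : ℝ → E}

theorem setOf_not_continuousAt_subset_iUnion_frequently_dist_ge
    (hf : ∀ x, ContinuousWithinAt f (Iio x) x) :
    {x | ¬ ContinuousAt f x} ⊆
      ⋃ n : ℕ, {x | ∃ᶠ y in 𝓝[≥] x, 1 / (n + 1 : ℝ) ≤ dist (f y) (f x)} := by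
  intro x hx
  have hright : ¬ ContinuousWithinAt f (Ici x) x := fun hr =>
    hx <| by simpa only [ContinuousAt, ← nhdsLT_sup_nhdsGE] using tendsto_sup.2 ⟨hf x, hr⟩
  obtain ⟨ε, hε, hfreq⟩ : ∃ ε > 0, ∃ᶠ y in 𝓝[≥] x, ε ≤ dist (f y) (f x) := by
    simpa only [ContinuousWithinAt, Metric.tendsto_nhds, not_forall, not_eventually, not_lt,
      exists_prop] using hright
  obtain ⟨n, hn⟩ := exists_nat_one_div_lt hε
  exact mem_iUnion.2 ⟨n, hfreq.mono fun y hy => hn.le.trans hy⟩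

/-- By left continuity each point `x` of this set has a left neighbourhood `(l x, x)` on which
`f` stays `ε/2`-close to `f x`. These intervals are disjoint: if `x < x'` and they met, `x` and
the points just right of it would lie in `(l x', x')`, where `f` cannot oscillate by `ε`. -/
theorem countable_setOf_frequently_dist_ge_nhdsGE
    (hf : ∀ x, ContinuousWithinAt f (Iio x) x) {ε : ℝ} (hε : 0 < ε) :
    {x | ∃ᶠ y in 𝓝[≥] x, ε ≤ dist (f y) (f x)}.Countable := by
  set S := {x | ∃ᶠ y in 𝓝[≥] x, ε ≤ dist (f y) (f x)}
  have hleft : ∀ x, ∃ l < x, ∀ y ∈ Ioo l x, dist (f y) (f x) < ε / 2 := fun x =>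
    mem_nhdsLT_iff_exists_Ioo_subset.1 (Metric.tendsto_nhds.1 (hf x) _ (half_pos hε))
  choose l hlx hl using hleft
  have hdisj : ∀ x ∈ S, ∀ x' ∈ S, x < x' → Disjoint (Ioo (l x) x) (Ioo (l x') x') := by
    refine fun x hx x' _ hxx' => disjoint_left.2 fun t ht ht' => ?_
    have hxI : x ∈ Ioo (l x') x' := ⟨ht'.1.trans ht.2, hxx'⟩
    obtain ⟨y, hy, hyI⟩ := (hx.and_eventually (Ico_mem_nhdsGE hxx')).exists
    have hyI' : y ∈ Ioo (l x') x' := ⟨hxI.1.trans_le hyI.1, hyI.2⟩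
    have := dist_triangle_right (f y) (f x) (f x')
    linarith [hl x' y hyI', hl x' x hxI]
  refine PairwiseDisjoint.countable_of_isOpen (fun x hx x' hx' hne => ?_)
    (fun _ _ => isOpen_Ioo) (fun x _ => nonempty_Ioo.2 (hlx x))
  rcases hne.lt_or_gt with h | h
  exacts [hdisj x hx x' hx' h, (hdisj x' hx' x hx h).symm]

theorem countable_setOf_not_continuousAt_of_continuousWithinAt_Iio
    (hf : ∀ x, ContinuousWithinAt f (Iio x) x) : {x | ¬ ContinuousAt f x}.Countable :=
  (countable_iUnion fun _ => countable_setOf_frequently_dist_ge_nhdsGE hf (by positivity)).mono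
    (setOf_not_continuousAt_subset_iUnion_frequently_dist_ge hf)

end LeftContinuous

namespace GriffinMaller

theorem Cadlag.exists_rat_lt_of_lt {w : ℝ → ℝ} (hw : Cadlag w) {s c : ℝ} (hs : 0 ≤ s)
    (hc : c < w s) : ∃ q : ℚ, 0 ≤ (q : ℝ) ∧ c < w q := by
  obtain ⟨u, hsu, hu⟩ := mem_nhdsGE_iff_exists_Ico_subset.1 (hw.1 s hs (Ioi_mem_nhds hc))
  obtain ⟨q, hsq, hqu⟩ := exists_rat_btwn (mem_Ioi.1 hsu)
  exact ⟨q, hs.trans hsq.le, hu ⟨hsq.le, hqu⟩⟩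

variable {Ω : Type*} {X : ℝ → Ω → ℝ}

/-- `shiftRuin X z` with the passage time restricted to rationals, which makes it measurable. -/
def ratRuin (X : ℝ → Ω → ℝ) (z : ℝ) : Set Ω := {ω | ∃ q : ℚ, 0 ≤ (q : ℝ) ∧ 0 < z + X q ω}

theorem measurableSet_ratRuin [MeasurableSpace Ω] (hX : ∀ t, Measurable (X t)) (z : ℝ) :
    MeasurableSet (ratRuin X z) := by
  simp only [ratRuin, ofPred_exists, ofPred_and]
  exact .iUnion fun q => (MeasurableSet.const _).inter
    (measurableSet_lt measurable_const (measurable_const.add (hX q)))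

theorem ratRuin_subset_shiftRuin (z : ℝ) : ratRuin X z ⊆ shiftRuin X z :=
  fun _ ⟨q, hq, hpos⟩ => ⟨q, hq, hpos⟩

theorem shiftRuin_ae_eq_ratRuin [MeasurableSpace Ω] {P : Measure Ω}
    (hX : ∀ᵐ ω ∂P, Cadlag (path X ω)) (z : ℝ) : shiftRuin X z =ᵐ[P] ratRuin X z := by
  refine eventuallyEq_set.2 (hX.mono fun ω hω => ⟨fun ⟨s, hs, hpos⟩ => ?_,
    fun h => ratRuin_subset_shiftRuin z h⟩)
  obtain ⟨q, hq, hlt⟩ := hω.exists_rat_lt_of_lt (c := -z) hs (by simp only [path]; linarith)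
  exact ⟨q, hq, by simp only [path] at hlt; linarith⟩

theorem ratRuin_mono : Monotone (ratRuin X) :=
  fun _ _ hyz _ ⟨q, hq, hpos⟩ => ⟨q, hq, by linarith⟩

theorem eventually_mem_ratRuin_nhdsLT {z : ℝ} {ω : Ω} (hω : ω ∈ ratRuin X z) :
    ∀ᶠ y in 𝓝[<] z, ω ∈ ratRuin X y := by
  obtain ⟨q, hq, hpos⟩ := hω
  filter_upwards [Ioo_mem_nhdsLT (show z - (z + X q ω) < z by linarith)] with y hy
  exact ⟨q, hq, by linarith [hy.1]⟩

/-- `E_z[φ(X); τ(0) < ∞]` is the integral of this function of `ω`. -/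
def ruinIntegrand (X : ℝ → Ω → ℝ) (φ : (ℝ → ℝ) → ℝ) (z : ℝ) : Ω → ℝ :=
  (ratRuin X z).indicator fun ω => φ fun t => z + X t ω

theorem tendsto_ruinIntegrand_nhdsLT {φ : (ℝ → ℝ) → ℝ} {z : ℝ} {ω : Ω}
    (hφ : ω ∈ shiftRuin X z → Tendsto (fun ε => φ fun t => z + X t ω - ε) (𝓝[>] 0)
      (𝓝 (φ fun t => z + X t ω))) :
    Tendsto (fun y => ruinIntegrand X φ y ω) (𝓝[<] z) (𝓝 (ruinIntegrand X φ z ω)) := by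
  by_cases hω : ω ∈ ratRuin X z
  · have hshift : Tendsto (fun y => φ fun t => y + X t ω) (𝓝[<] z) (𝓝 (φ fun t => z + X t ω)) := by
      have hsub : Tendsto (z - ·) (𝓝[<] z) (𝓝[>] 0) := by
        simpa only [Tendsto, sub_self] using (map_subLeft_nhdsLT (c := z) (a := z)).le
      refine ((hφ (ratRuin_subset_shiftRuin z hω)).comp hsub).congr fun y => ?_
      simp only [Function.comp_apply, add_sub_sub_cancel, add_comm]
    rw [ruinIntegrand, indicator_of_mem hω]
    exact hshift.congr' ((eventually_mem_ratRuin_nhdsLT hω).mono fun y hy =>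
      (indicator_of_mem hy _).symm)
  · rw [ruinIntegrand, indicator_of_notMem hω]
    exact tendsto_const_nhds.congr' (eventually_nhdsWithin_of_forall fun y hy =>
      (indicator_of_notMem (fun h => hω (ratRuin_mono (le_of_lt hy) h)) _).symm)

theorem measurable_alive : Measurable alive :=
  measurable_pi_lambda _ fun t => measurable_coe_real_ereal.comp (measurable_pi_apply t)

variable [MeasurableSpace Ω]

theorem measurable_ruinIntegrand (hX : ∀ t, Measurable (X t)) {φ : (ℝ → ℝ) → ℝ}
    (hφ : Measurable φ) (z : ℝ) : Measurable (ruinIntegrand X φ z) :=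
  (hφ.comp (measurable_pi_lambda _ fun t => measurable_const.add (hX t))).indicator
    (measurableSet_ratRuin hX z)

theorem GFun_eq_integral_ruinIntegrand {P : Measure Ω} (hX : ∀ t, Measurable (X t))
    (hcadlag : ∀ᵐ ω ∂P, Cadlag (path X ω)) (H : (ℝ → EReal) → (ℝ → EReal) → ℝ)
    (v : ℝ → EReal) :
    GFun P X H v = fun z => ∫ ω, ruinIntegrand X (fun w => H v (alive w)) z ω ∂P := by
  funext z
  rw [GFun, Measure.restrict_congr_set (shiftRuin_ae_eq_ratRuin hcadlag z),
    ← integral_indicator (measurableSet_ratRuin hX z)]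
  rfl

theorem continuousWithinAt_Iio_integral_ruinIntegrand {P : Measure Ω} [IsFiniteMeasure P]
    (hX : ∀ t, Measurable (X t)) {φ : (ℝ → ℝ) → ℝ} (hφ : Measurable φ) {B : ℝ}
    (hB : ∀ w, ‖φ w‖ ≤ B) {z : ℝ}
    (hbelow : ∀ᵐ ω ∂P, ω ∈ shiftRuin X z → Tendsto (fun ε => φ fun t => z + X t ω - ε)
      (𝓝[>] 0) (𝓝 (φ fun t => z + X t ω))) :
    ContinuousWithinAt (fun y => ∫ ω, ruinIntegrand X φ y ω ∂P) (Iio z) z :=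
  tendsto_integral_filter_of_dominated_convergence (fun _ => B)
    (.of_forall fun y => (measurable_ruinIntegrand hX hφ y).aestronglyMeasurable)
    (.of_forall fun _ => .of_forall fun _ => (norm_indicator_le_norm_self _ _).trans (hB _))
    (integrable_const B) (hbelow.mono fun _ hω => tendsto_ruinIntegrand_nhdsLT hω)

theorem continuity_from_below_implies_f2_general
    {Ω : Type*} [MeasurableSpace Ω]
    (P : Measure Ω) (X : ℝ → Ω → ℝ) (hlevy : IsLevy P X)
    (α : ℝ)
    (H : (ℝ → EReal) → (ℝ → EReal) → ℝ)
    (hmeas : Measurable (Function.uncurry H))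
    (hf1 : ∃ θ : ℝ, 0 ≤ θ ∧ θ < α ∧ ∃ C : ℝ, ∀ v v' : ℝ → EReal,
      |H v v'| * Real.exp (θ * min (preDeath v) 0) ≤ C)
    (hbelow : ∀ v : ℝ → EReal, ∀ z : ℝ, ∀ᵐ ω ∂P, ω ∈ shiftRuin X z →
      Tendsto (fun ε : ℝ => H v (alive fun t => z + X t ω - ε))
        (nhdsWithin 0 (Set.Ioi 0)) (nhds (H v (alive fun t => z + X t ω)))) :
    ∀ v : ℝ → EReal,
      {z : ℝ | ¬ ContinuousAt (GFun P X H v) z}.Countable ∧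
        ∀ᵐ z ∂(volume : Measure ℝ), ContinuousAt (GFun P X H v) z := by
  intro v
  have := hlevy.isProb
  obtain ⟨θ, -, -, C, hC⟩ := hf1
  have hbound : ∀ w, ‖H v (alive w)‖ ≤ C * (Real.exp (θ * min (preDeath v) 0))⁻¹ :=
    fun w => (le_mul_inv_iff₀ (Real.exp_pos _)).2 (hC v _)
  have hleft : ∀ z, ContinuousWithinAt (GFun P X H v) (Iio z) z := by
    rw [GFun_eq_integral_ruinIntegrand hlevy.meas hlevy.cadlag]
    exact fun z => continuousWithinAt_Iio_integral_ruinIntegrand hlevy.meas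
      ((hmeas.comp measurable_prodMk_left).comp measurable_alive) hbound (hbelow v z)
  have hcount := countable_setOf_not_continuousAt_of_continuousWithinAt_Iio hleft
  exact ⟨hcount, ae_iff.2 (hcount.measure_zero _)⟩

/-- **Proposition 4.4.**  If `H` is product measurable, satisfies (f1), and for each
`w ∈ D` the function `H(w,·)` is continuous from below on `{τ_0(w') < ∞}` a.s. `P_z`
for every `z`, then (f2) holds: `z ↦ G(w,z)` is continuous at all but countably many
`z`, hence continuous Lebesgue-a.e. -/
theorem continuity_from_below_implies_f2
    {Ω : Type*} [MeasurableSpace Ω]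
    (P : Measure Ω) (X : ℝ → Ω → ℝ) (hlevy : IsLevy P X)
    (hns : NotNegSubordinator P X) (α : ℝ) (hα : 0 < α)
    (H : (ℝ → EReal) → (ℝ → EReal) → ℝ)
    (hmeas : Measurable (Function.uncurry H))
    (hf1 : ∃ θ : ℝ, 0 ≤ θ ∧ θ < α ∧ ∃ C : ℝ, ∀ v v' : ℝ → EReal,
      |H v v'| * Real.exp (θ * min (preDeath v) 0) ≤ C)
    (hbelow : ∀ v : ℝ → EReal, ∀ z : ℝ, ∀ᵐ ω ∂P, ω ∈ shiftRuin X z →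
      Tendsto (fun ε : ℝ => H v (alive fun t => z + X t ω - ε))
        (nhdsWithin 0 (Set.Ioi 0)) (nhds (H v (alive fun t => z + X t ω)))) :
    ∀ v : ℝ → EReal,
      {z : ℝ | ¬ ContinuousAt (GFun P X H v) z}.Countable ∧
        ∀ᵐ z ∂(volume : Measure ℝ), ContinuousAt (GFun P X H v) z :=
  continuity_from_below_implies_f2_general P X hlevy α H hmeas hf1 hbelow

end GriffinMaller
end
end

section
/- Convolution bound for dominated distributions (Lemma 8.1). Let F and G be distribution functions on the real line with F(0−)=G(0−)=0, suppose F belongs to the convolution equivalent class S^(α) for some α>0, and suppose limsup_{u→∞} Ḡ(u)/F̄(u) < ∞, where F̄=1−F and Ḡ=1−G. Then limsup_{u→∞} ∫ [F̄(u−y)/F̄(u)] G(dy) < ∞. -/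
open MeasureTheory ProbabilityTheory Filter Set Real
open scoped ENNReal NNReal

noncomputable section

namespace GriffinMaller

/-! ### Lévy processes -/

variable {Ω : Type*} [MeasurableSpace Ω]

theorem mconv_apply_Ioi (μ ν : Measure ℝ) [SFinite μ] [SFinite ν] (u : ℝ) :
    mconv μ ν (Ioi u) = ∫⁻ x, ν (Ioi (u - x)) ∂μ := by
  have hadd : Measurable fun p : ℝ × ℝ => p.1 + p.2 := measurable_fst.add measurable_snd
  rw [mconv, Measure.map_apply hadd measurableSet_Ioi, Measure.prod_apply (hadd measurableSet_Ioi)]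
  refine lintegral_congr fun x => congrArg ν ?_
  ext y
  simp [sub_lt_iff_lt_add']

theorem mconv_apply_Ioi' (μ ν : Measure ℝ) [SFinite μ] [SFinite ν] (u : ℝ) :
    mconv μ ν (Ioi u) = ∫⁻ y, μ (Ioi (u - y)) ∂ν := by
  have hadd : Measurable fun p : ℝ × ℝ => p.1 + p.2 := measurable_fst.add measurable_snd
  rw [mconv, Measure.map_apply hadd measurableSet_Ioi,
    Measure.prod_apply_symm (hadd measurableSet_Ioi)]
  refine lintegral_congr fun y => congrArg μ ?_
  ext x
  simp [sub_lt_iff_lt_add]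

instance isFiniteMeasure_mconv (μ ν : Measure ℝ) [IsFiniteMeasure μ] [IsFiniteMeasure ν] :
    IsFiniteMeasure (mconv μ ν) := by
  unfold mconv
  infer_instance

theorem measurable_measure_Ioi_sub (μ : Measure ℝ) (u : ℝ) :
    Measurable fun x : ℝ => μ (Ioi (u - x)) :=
  Monotone.measurable fun _ _ hab => measure_mono (Ioi_subset_Ioi (by linarith))

section TailDomination

variable {μ ν : Measure ℝ} {c : ℝ≥0∞} {y₀ : ℝ}

theorem measure_Ioi_sub_le_of_tail_le (h : ∀ v ≥ y₀, ν (Ioi v) ≤ c * μ (Ioi v)) (u x : ℝ) :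
    ν (Ioi (u - x)) ≤ c * μ (Ioi (u - x)) + (Ioi (u - y₀)).indicator (fun _ => ν univ) x := by
  by_cases hx : x ∈ Ioi (u - y₀)
  · rw [indicator_of_mem hx]
    exact (measure_mono (subset_univ _)).trans le_add_self
  · rw [indicator_of_notMem hx, add_zero]
    exact h _ (by simp only [mem_Ioi, not_lt] at hx; linarith)

/-- Writing `∫ F̄(u - y) G(dy) = ∫ Ḡ(u - x) F(dx)`, the tail `Ḡ(u - x)` is dominated by
`c F̄(u - x)` except for `x > u - y₀`, an event of `F`-mass `F̄(u - y₀)`. -/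
theorem lintegral_measure_Ioi_sub_le_of_tail_le [SFinite μ] [SFinite ν]
    (h : ∀ v ≥ y₀, ν (Ioi v) ≤ c * μ (Ioi v)) (u : ℝ) :
    ∫⁻ y, μ (Ioi (u - y)) ∂ν ≤ c * mconv μ μ (Ioi u) + ν univ * μ (Ioi (u - y₀)) := by
  calc ∫⁻ y, μ (Ioi (u - y)) ∂ν = ∫⁻ x, ν (Ioi (u - x)) ∂μ := by
        rw [← mconv_apply_Ioi', mconv_apply_Ioi]
    _ ≤ ∫⁻ x, (c * μ (Ioi (u - x)) + (Ioi (u - y₀)).indicator (fun _ => ν univ) x) ∂μ :=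
        lintegral_mono (measure_Ioi_sub_le_of_tail_le h u)
    _ = c * mconv μ μ (Ioi u) + ν univ * μ (Ioi (u - y₀)) := by
        rw [lintegral_add_left ((measurable_measure_Ioi_sub μ u).const_mul c),
          lintegral_const_mul c (measurable_measure_Ioi_sub μ u),
          lintegral_indicator_const measurableSet_Ioi, ← mconv_apply_Ioi]

theorem integral_mtail_sub_le_of_tail_le [IsFiniteMeasure μ] [IsFiniteMeasure ν] {C : ℝ}
    (hC : 0 ≤ C) (h : ∀ v ≥ y₀, mtail ν v ≤ C * mtail μ v) (u : ℝ) :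
    ∫ y, mtail μ (u - y) ∂ν ≤ C * mtail (mconv μ μ) u + ν.real univ * mtail μ (u - y₀) := by
  have hENN : ∀ v ≥ y₀, ν (Ioi v) ≤ ENNReal.ofReal C * μ (Ioi v) := fun v hv => by
    rw [← ENNReal.ofReal_toReal (measure_ne_top ν _), ← ENNReal.ofReal_toReal (measure_ne_top μ _),
      ← ENNReal.ofReal_mul hC]
    exact ENNReal.ofReal_le_ofReal (h v hv)
  have hint : ∫ y, mtail μ (u - y) ∂ν = (∫⁻ y, μ (Ioi (u - y)) ∂ν).toReal :=
    integral_toReal (measurable_measure_Ioi_sub μ u).aemeasurable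
      (ae_of_all _ fun _ => measure_lt_top _ _)
  rw [hint]
  refine (ENNReal.toReal_mono (by finiteness)
    (lintegral_measure_Ioi_sub_le_of_tail_le hENN u)).trans_eq ?_
  rw [ENNReal.toReal_add (by finiteness) (by finiteness), ENNReal.toReal_mul, ENNReal.toReal_mul,
    ENNReal.toReal_ofReal hC]
  rfl

end TailDomination

theorem exists_tail_le_mul_tail {μ ν : Measure ℝ} (hpos : ∀ u, 0 < mtail μ u)
    (h : IsBoundedUnder (· ≤ ·) atTop fun u => mtail ν u / mtail μ u) :
    ∃ C, 0 ≤ C ∧ ∃ y₀, ∀ v ≥ y₀, mtail ν v ≤ C * mtail μ v := by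
  obtain ⟨C, hC⟩ := h
  obtain ⟨y₀, hy₀⟩ := eventually_atTop.1 (eventually_map.1 hC)
  refine ⟨max C 0, le_max_right C 0, y₀, fun v hv => ?_⟩
  rw [← div_le_iff₀ (hpos v)]
  exact (hy₀ v hv).trans (le_max_left C 0)

theorem convolution_bound_general
    (α : ℝ) (mF mG : Measure ℝ)
    (hF : IsConvEquiv α mF)
    (hG : IsProbabilityMeasure mG)
    (hdom : IsBoundedUnder (· ≤ ·) atTop fun u => mtail mG u / mtail mF u) :
    IsBoundedUnder (· ≤ ·) atTop
      fun u => ∫ y, mtail mF (u - y) / mtail mF u ∂mG := by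
  obtain ⟨hFprob, -, hFpos, hFshift, L, hL⟩ := hF
  obtain ⟨C, hC, y₀, hGF⟩ := exists_tail_le_mul_tail hFpos hdom
  have hconv : ∀ᶠ u in atTop, mtail (mconv mF mF) u / mtail mF u ≤ L + 1 :=
    hL.eventually (eventually_le_nhds (lt_add_one L))
  have hshift : ∀ᶠ u in atTop, mtail mF (u + -y₀) / mtail mF u ≤ exp (-α * -y₀) + 1 :=
    (hFshift (-y₀)).eventually (eventually_le_nhds (lt_add_one _))
  refine ⟨C * (L + 1) + (exp (-α * -y₀) + 1), eventually_map.2 ?_⟩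
  filter_upwards [hconv, hshift] with u hconv hshift
  calc ∫ y, mtail mF (u - y) / mtail mF u ∂mG
      = (∫ y, mtail mF (u - y) ∂mG) / mtail mF u := integral_div _ _
    _ ≤ (C * mtail (mconv mF mF) u + mtail mF (u + -y₀)) / mtail mF u := by
        gcongr
        · exact (hFpos u).le
        · simpa [← sub_eq_add_neg] using integral_mtail_sub_le_of_tail_le hC hGF u
    _ = C * (mtail (mconv mF mF) u / mtail mF u) + mtail mF (u + -y₀) / mtail mF u := by ring
    _ ≤ C * (L + 1) + (exp (-α * -y₀) + 1) := by gcongr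

/-- **Lemma 8.1 (Convolution bound for dominated distributions).**  Let `F, G` be
distributions on `[0,∞)` with `F ∈ S^(α)` and `limsup_{u→∞} Ḡ(u)/F̄(u) < ∞`.  Then
`limsup_{u→∞} ∫ F̄(u-y)/F̄(u) G(dy) < ∞`. -/
theorem convolution_bound
    (α : ℝ) (hα : 0 < α) (mF mG : Measure ℝ)
    (hF : IsConvEquiv α mF)
    (hG : IsProbabilityMeasure mG) (hG0 : mG (Set.Iio 0) = 0)
    (hdom : IsBoundedUnder (· ≤ ·) atTop fun u => mtail mG u / mtail mF u) :
    IsBoundedUnder (· ≤ ·) atTop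
      fun u => ∫ y, mtail mF (u - y) / mtail mF u ∂mG :=
  convolution_bound_general α mF mG hF hG hdom

end GriffinMaller
end
end
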